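/- Let {E^j}_{j=1}^{M₁} be a δ-packing of the Grassmann manifold Gr(p,r) under the metric ρ₂(E,F) = (1/√2)‖P_E − P_F‖_F (with P_E the orthogonal projection onto E), and let {Q^k}_{k=1}^{M₂} be a δ-packing of the orthogonal group O(r) under the Frobenius norm. Choose U^j ∈ St(p,r) with span(U^j) = E^j. Then the set {U^j Q^k : j ∈ [M₁], k ∈ [M₂]} is a δ-packing of the Stiefel manifold St(p,r) under the Frobenius norm; in particular M(δ; St(p,r), ‖·‖_F) ≥ M(δ; Gr(p,r), ρ₂) · M(δ; O(r), ‖·‖_F). -/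

import Mathlib

open Matrix

/-- Frobenius norm of a real matrix. -/
noncomputable def frob {m n : Type*} [Fintype m] [Fintype n] (A : Matrix m n ℝ) : ℝ :=
  Real.sqrt (∑ i, ∑ j, (A i j) ^ 2)

/-!
Two points of the packing with the same frame `U^j` are as far apart as the corresponding
orthogonal matrices, because left multiplication by a matrix with orthonormal columns preserves
the Frobenius norm. For distinct frames, `‖U Qᵏ − V Qˡ‖_F = ‖U − V Qˡ Qᵏᵀ‖_F`, and for every
orthogonal `Q` the distance `ρ₂(span U, span V)` is at most `‖U − V Q‖_F`: with `X = Uᵀ V`,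
`‖U − V Q‖² − ρ₂² = ‖X − Qᵀ‖² ≥ 0`.
-/

section Frobenius

variable {m n k : Type*} [Fintype m] [Fintype n] [Fintype k]

lemma frob_nonneg (A : Matrix m n ℝ) : 0 ≤ frob A := Real.sqrt_nonneg _

lemma frob_sq_eq_trace (A : Matrix m n ℝ) : frob A ^ 2 = trace (Aᵀ * A) := by
  rw [frob, Real.sq_sqrt (by positivity)]
  simp only [trace, diag, mul_apply, transpose_apply, sq]
  exact Finset.sum_comm

lemma frob_sub_sq (A B : Matrix m n ℝ) :
    frob (A - B) ^ 2 = frob A ^ 2 - 2 * trace (Aᵀ * B) + frob B ^ 2 := by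
  rw [frob_sq_eq_trace, frob_sq_eq_trace, frob_sq_eq_trace, transpose_sub, Matrix.sub_mul,
    Matrix.mul_sub, Matrix.mul_sub, trace_sub, trace_sub, trace_sub, ← trace_transpose (Bᵀ * A),
    transpose_mul, transpose_transpose]
  ring

variable [DecidableEq n]

lemma frob_mul_of_transpose_mul_self {U : Matrix m n ℝ} (hU : Uᵀ * U = 1)
    (A : Matrix n k ℝ) : frob (U * A) = frob A := by
  rw [← sq_eq_sq₀ (frob_nonneg _) (frob_nonneg _), frob_sq_eq_trace, frob_sq_eq_trace,
    transpose_mul, Matrix.mul_assoc, ← Matrix.mul_assoc Uᵀ, hU, Matrix.one_mul]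

lemma frob_mul_orthogonal {Q : Matrix n n ℝ} (hQ : Qᵀ * Q = 1) (X : Matrix m n ℝ) :
    frob (X * Q) = frob X := by
  rw [← sq_eq_sq₀ (frob_nonneg _) (frob_nonneg _), frob_sq_eq_trace, frob_sq_eq_trace,
    transpose_mul, Matrix.mul_assoc, trace_mul_comm, Matrix.mul_assoc, Matrix.mul_assoc,
    mul_eq_one_comm.1 hQ, Matrix.mul_one]

lemma orthogonal_mul_transpose {A B : Matrix n n ℝ} (hA : Aᵀ * A = 1) (hB : Bᵀ * B = 1) :
    (A * Bᵀ)ᵀ * (A * Bᵀ) = 1 := by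
  rw [transpose_mul, transpose_transpose, Matrix.mul_assoc, ← Matrix.mul_assoc Aᵀ, hA,
    Matrix.one_mul, mul_eq_one_comm.1 hB]

lemma frob_mul_transpose_sq {U : Matrix m n ℝ} (hU : Uᵀ * U = 1) :
    frob (U * Uᵀ) ^ 2 = trace (1 : Matrix n n ℝ) := by
  rw [frob_mul_of_transpose_mul_self hU, frob_sq_eq_trace, transpose_transpose, trace_mul_comm,
    hU]

lemma frob_projection_sub_sq_le {U V : Matrix m n ℝ} (hU : Uᵀ * U = 1) (hV : Vᵀ * V = 1)
    {Q : Matrix n n ℝ} (hQ : Qᵀ * Q = 1) :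
    frob (U * Uᵀ - V * Vᵀ) ^ 2 ≤ 2 * frob (U - V * Q) ^ 2 := by
  set X := Uᵀ * V
  have hproj : frob (U * Uᵀ - V * Vᵀ) ^ 2 = 2 * trace (1 : Matrix n n ℝ) - 2 * frob X ^ 2 := by
    have hcross : trace ((U * Uᵀ)ᵀ * (V * Vᵀ)) = trace (Xᵀ * X) := by
      rw [transpose_mul, transpose_transpose, ← Matrix.mul_assoc, trace_mul_comm]
      simp only [X, transpose_mul, transpose_transpose, Matrix.mul_assoc]
    rw [frob_sub_sq, frob_mul_transpose_sq hU, frob_mul_transpose_sq hV, frob_sq_eq_trace X,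
      hcross]
    ring
  have hdist : frob (U - V * Q) ^ 2 = 2 * trace (1 : Matrix n n ℝ) - 2 * trace (X * Q) := by
    rw [frob_sub_sq, frob_mul_of_transpose_mul_self hV, frob_sq_eq_trace U, frob_sq_eq_trace Q,
      hU, hQ, ← Matrix.mul_assoc]
    ring
  have hgap : frob (X - Qᵀ) ^ 2 = frob X ^ 2 - 2 * trace (X * Q) + trace (1 : Matrix n n ℝ) := by
    rw [frob_sub_sq, frob_sq_eq_trace Qᵀ, transpose_transpose, mul_eq_one_comm.1 hQ,
      ← transpose_mul, trace_transpose, trace_mul_comm]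
  linarith [sq_nonneg (frob (X - Qᵀ))]

lemma inv_sqrt_two_mul_frob_projection_sub_le {U V : Matrix m n ℝ} (hU : Uᵀ * U = 1)
    (hV : Vᵀ * V = 1) {Q : Matrix n n ℝ} (hQ : Qᵀ * Q = 1) :
    1 / Real.sqrt 2 * frob (U * Uᵀ - V * Vᵀ) ≤ frob (U - V * Q) := by
  refine le_of_pow_le_pow_left₀ two_ne_zero (frob_nonneg _) ?_
  rw [mul_pow, div_pow, one_pow, Real.sq_sqrt zero_le_two]
  linarith [frob_projection_sub_sq_le hU hV hQ]

end Frobenius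

/-- If `{span(U^j)}` is a `δ`-packing of the Grassmannian `Gr(p,r)` for the metric
`ρ₂(E,F) = (1/√2)‖P_E − P_F‖_F` (with `P_E = U U ᵀ` for orthonormal `U`), and `{Q^k}`
is a `δ`-packing of `O(r)` in the Frobenius norm, then `{U^j Q^k}` is a `δ`-packing of
the Stiefel manifold `St(p,r)` in the Frobenius norm. In particular, the packing
number of `St(p,r)` is at least the product of those of `Gr(p,r)` and `O(r)`. -/
theorem stiefel_packing_of_grassmann_and_orthogonal
    {p r M₁ M₂ : ℕ} (δ : ℝ)
    (U : Fin M₁ → Matrix (Fin p) (Fin r) ℝ)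
    (hU : ∀ j, (U j)ᵀ * U j = 1)
    (hUpack : ∀ j j', j ≠ j' →
      δ < (1 / Real.sqrt 2) * frob (U j * (U j)ᵀ - U j' * (U j')ᵀ))
    (Q : Fin M₂ → Matrix (Fin r) (Fin r) ℝ)
    (hQ : ∀ k, (Q k)ᵀ * Q k = 1)
    (hQpack : ∀ k k', k ≠ k' → δ < frob (Q k - Q k')) :
    ∀ j k j' k', (j, k) ≠ (j', k') → δ < frob (U j * Q k - U j' * Q k') := by
  intro j k j' k' hne
  by_cases hj : j = j'
  · subst hj
    have hk : k ≠ k' := fun h => hne (by rw [h])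
    calc δ < frob (Q k - Q k') := hQpack k k' hk
      _ = frob (U j * Q k - U j * Q k') := by
        rw [← Matrix.mul_sub, frob_mul_of_transpose_mul_self (hU j)]
  · calc δ < 1 / Real.sqrt 2 * frob (U j * (U j)ᵀ - U j' * (U j')ᵀ) := hUpack j j' hj
      _ ≤ frob (U j - U j' * (Q k' * (Q k)ᵀ)) :=
        inv_sqrt_two_mul_frob_projection_sub_le (hU j) (hU j')
          (orthogonal_mul_transpose (hQ k') (hQ k))
      _ = frob (U j * Q k - U j' * Q k') := by
        rw [← frob_mul_orthogonal (hQ k), Matrix.sub_mul, Matrix.mul_assoc, Matrix.mul_assoc,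
          hQ k, Matrix.mul_one]
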